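/- Let H₀, H₁, K₁ be complex Hilbert spaces, and let T₀ ∈ B(H₀), T₁ ∈ B(H₁), V₁ ∈ B(K₁), K ∈ B(H₁, K₁), A ∈ B(H₁, H₀). Define the block operators V on K₁ ⊕₂ H₁ by V(k, h) = (V₁k + Kh, T₁h), R on H₀ ⊕₂ H₁ by R(x, h) = (T₀x + Ah, T₁h), and R₀ on H₀ ⊕₂ K₁ ⊕₂ H₁ by R₀(x, k, h) = (T₀x + Ah, V₁k + Kh, T₁h). If V is power bounded, then R is power bounded if and only if R₀ is power bounded. -/

import Mathlib

/-!
The projections `(x, k, h) ↦ (x, h)` and `(x, k, h) ↦ (k, h)` intertwine `R₀` with `R` and with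
`V`, and together they control the norm on `H₀ ⊕₂ K₁ ⊕₂ H₁`; so uniform bounds on the powers of
`R` and `V` bound the powers of `R₀`. Conversely the first projection has the bounded right
inverse `(x, h) ↦ (x, 0, h)`, which exhibits `Rⁿ` as a compression of `R₀ⁿ`.
-/

noncomputable section

/-- An operator is power bounded if the norms of its powers are uniformly bounded. -/
def PowerBounded {H : Type*} [NormedAddCommGroup H] [NormedSpace ℂ H] (T : H →L[ℂ] H) : Prop :=
  ∃ C : ℝ, ∀ n : ℕ, ‖T ^ n‖ ≤ C

open Function ContinuousLinearMap

section

variable {E F G : Type*} [NormedAddCommGroup E] [NormedSpace ℂ E]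
  [NormedAddCommGroup F] [NormedSpace ℂ F] [NormedAddCommGroup G] [NormedSpace ℂ G]

theorem PowerBounded.of_semiconj_of_rightInverse {S : E →L[ℂ] E} {T : F →L[ℂ] F}
    (π : E →L[ℂ] F) (ι : F →L[ℂ] E) (hπι : RightInverse ι π) (hπ : Semiconj π S T)
    (hS : PowerBounded S) : PowerBounded T := by
  obtain ⟨C, hC⟩ := hS
  refine ⟨‖π‖ * (C * ‖ι‖), fun n ↦ ?_⟩
  have hTn : T ^ n = π ∘L (S ^ n) ∘L ι := by
    ext y
    simp only [ContinuousLinearMap.comp_apply, FunLike.coe_pow_eq_iterate, (hπ.iterate_right n).eq, hπι y]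
  calc ‖T ^ n‖ ≤ ‖π‖ * (‖S ^ n‖ * ‖ι‖) := by
        rw [hTn]; exact (opNorm_comp_le _ _).trans (by gcongr; exact opNorm_comp_le _ _)
    _ ≤ ‖π‖ * (C * ‖ι‖) := by gcongr; exact hC n

theorem PowerBounded.of_semiconj_of_norm_le_add {S : E →L[ℂ] E} {T : F →L[ℂ] F}
    {U : G →L[ℂ] G} (π : E →L[ℂ] F) (ρ : E →L[ℂ] G) (hnorm : ∀ z, ‖z‖ ≤ ‖π z‖ + ‖ρ z‖)
    (hπ : Semiconj π S T) (hρ : Semiconj ρ S U) (hT : PowerBounded T) (hU : PowerBounded U) :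
    PowerBounded S := by
  obtain ⟨CT, hCT⟩ := hT
  obtain ⟨CU, hCU⟩ := hU
  have hCT₀ : 0 ≤ CT := (norm_nonneg _).trans (hCT 0)
  have hCU₀ : 0 ≤ CU := (norm_nonneg _).trans (hCU 0)
  refine ⟨CT * ‖π‖ + CU * ‖ρ‖, fun n ↦ opNorm_le_bound _ (by positivity) fun z ↦ ?_⟩
  calc ‖(S ^ n) z‖ ≤ ‖(T ^ n) (π z)‖ + ‖(U ^ n) (ρ z)‖ := by
        simpa only [FunLike.coe_pow_eq_iterate, (hπ.iterate_right n).eq,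
          (hρ.iterate_right n).eq] using hnorm ((S ^ n) z)
    _ ≤ CT * (‖π‖ * ‖z‖) + CU * (‖ρ‖ * ‖z‖) := by
        gcongr
        · exact le_of_opNorm_le _ (hCT n) _ |>.trans (by gcongr; exact le_opNorm _ _)
        · exact le_of_opNorm_le _ (hCU n) _ |>.trans (by gcongr; exact le_opNorm _ _)
    _ = (CT * ‖π‖ + CU * ‖ρ‖) * ‖z‖ := by ring

end

namespace WithLp

variable (𝕜 E F G : Type*) [NontriviallyNormedField 𝕜] [NormedAddCommGroup E] [NormedSpace 𝕜 E]
  [NormedAddCommGroup F] [NormedSpace 𝕜 F] [NormedAddCommGroup G] [NormedSpace 𝕜 G]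

def dropMiddleL : WithLp 2 (E × WithLp 2 (F × G)) →L[𝕜] WithLp 2 (E × G) :=
  (prodContinuousLinearEquiv 2 𝕜 E G).symm.toContinuousLinearMap ∘L
    (fstL 2 𝕜 E _).prod (sndL 2 𝕜 F G ∘L sndL 2 𝕜 E _)

def insertZeroMiddleL : WithLp 2 (E × G) →L[𝕜] WithLp 2 (E × WithLp 2 (F × G)) :=
  (prodContinuousLinearEquiv 2 𝕜 E _).symm.toContinuousLinearMap ∘L
    (fstL 2 𝕜 E G).prod ((prodContinuousLinearEquiv 2 𝕜 F G).symm.toContinuousLinearMap ∘L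
      inr 𝕜 F G ∘L sndL 2 𝕜 E G)

variable {𝕜 E F G}

theorem dropMiddleL_apply (z : WithLp 2 (E × WithLp 2 (F × G))) :
    dropMiddleL 𝕜 E F G z = toLp 2 (z.fst, z.snd.snd) := rfl

theorem rightInverse_insertZeroMiddleL :
    RightInverse (insertZeroMiddleL 𝕜 E F G) (dropMiddleL 𝕜 E F G) := fun _ ↦ rfl

theorem norm_le_norm_dropMiddleL_add_norm_snd (z : WithLp 2 (E × WithLp 2 (F × G))) :
    ‖z‖ ≤ ‖dropMiddleL 𝕜 E F G z‖ + ‖z.snd‖ := by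
  have hsq : ‖z‖ ^ 2 ≤ ‖dropMiddleL 𝕜 E F G z‖ ^ 2 + ‖z.snd‖ ^ 2 := by
    simp only [dropMiddleL_apply, prod_norm_sq_eq_of_L2, toLp_fst, toLp_snd]
    linarith [sq_nonneg ‖z.snd.snd‖]
  nlinarith [norm_nonneg z, norm_nonneg (dropMiddleL 𝕜 E F G z), norm_nonneg z.snd]

end WithLp

open WithLp in
theorem powerBounded_R_iff_R₀
    {H₀ H₁ K₁ : Type}
    [NormedAddCommGroup H₀] [InnerProductSpace ℂ H₀]
    [NormedAddCommGroup H₁] [InnerProductSpace ℂ H₁]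
    [NormedAddCommGroup K₁] [InnerProductSpace ℂ K₁]
    (T₀ : H₀ →L[ℂ] H₀) (T₁ : H₁ →L[ℂ] H₁) (V₁ : K₁ →L[ℂ] K₁)
    (K : H₁ →L[ℂ] K₁) (A : H₁ →L[ℂ] H₀)
    (V : WithLp 2 (K₁ × H₁) →L[ℂ] WithLp 2 (K₁ × H₁))
    (hV : ∀ (k : K₁) (h : H₁),
      V ((WithLp.equiv 2 (K₁ × H₁)).symm (k, h))
        = (WithLp.equiv 2 (K₁ × H₁)).symm (V₁ k + K h, T₁ h))
    (R : WithLp 2 (H₀ × H₁) →L[ℂ] WithLp 2 (H₀ × H₁))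
    (hR : ∀ (x : H₀) (h : H₁),
      R ((WithLp.equiv 2 (H₀ × H₁)).symm (x, h))
        = (WithLp.equiv 2 (H₀ × H₁)).symm (T₀ x + A h, T₁ h))
    (R₀ : WithLp 2 (H₀ × WithLp 2 (K₁ × H₁)) →L[ℂ] WithLp 2 (H₀ × WithLp 2 (K₁ × H₁)))
    (hR₀ : ∀ (x : H₀) (k : K₁) (h : H₁),
      R₀ ((WithLp.equiv 2 (H₀ × WithLp 2 (K₁ × H₁))).symm
            (x, (WithLp.equiv 2 (K₁ × H₁)).symm (k, h)))
        = (WithLp.equiv 2 (H₀ × WithLp 2 (K₁ × H₁))).symm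
            (T₀ x + A h, (WithLp.equiv 2 (K₁ × H₁)).symm (V₁ k + K h, T₁ h)))
    (hVpb : PowerBounded V) :
    PowerBounded R ↔ PowerBounded R₀ := by
  simp only [equiv_symm_apply] at hV hR hR₀
  have hπ : Semiconj (dropMiddleL ℂ H₀ K₁ H₁) R₀ R := by
    rintro ⟨x, ⟨k, h⟩⟩
    simp only [dropMiddleL_apply, hR₀, hR, toLp_fst, toLp_snd]
  have hρ : Semiconj (sndL 2 ℂ H₀ (WithLp 2 (K₁ × H₁))) R₀ V := by
    rintro ⟨x, ⟨k, h⟩⟩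
    simp only [sndL_apply, hR₀, hV, toLp_snd]
  exact ⟨fun hRpb ↦ .of_semiconj_of_norm_le_add _ _ norm_le_norm_dropMiddleL_add_norm_snd
      hπ hρ hRpb hVpb,
    .of_semiconj_of_rightInverse _ _ rightInverse_insertZeroMiddleL hπ⟩
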